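/- arXiv:1406.2541 — 2 statements merged into one kernel-verified Lean document; each statement's English description precedes it below -/
import Mathlib

section
/- If b is uniformly distributed on [0, 2π] and x, x', w are fixed real vectors, then 2·E_b[cos(wᵀx + b)·cos(wᵀx' + b)] = cos(wᵀ(x - x')). -/
/-!
By the product-to-sum identity, `2 cos(u + b) cos(v + b) = cos(u - v) + cos(u + v + 2b)`.
The first term does not depend on `b`, and the second averages to zero because `[0, 2π]`
covers two full periods of `b ↦ cos(2b + c)`.
-/

open Real Matrix

lemma integral_cos_int_mul_add_eq_zero {k : ℤ} (hk : k ≠ 0) (c : ℝ) :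
    ∫ b in (0 : ℝ)..(2 * π), cos (k * b + c) = 0 := by
  have hk' : (k : ℝ) ≠ 0 := Int.cast_ne_zero.mpr hk
  rw [intervalIntegral.integral_comp_mul_add cos hk', integral_cos, mul_zero, zero_add,
    add_comm _ c, sin_add_int_mul_two_pi, sub_self, smul_zero]

lemma two_mul_cos_add_mul_cos_add (u v b : ℝ) :
    2 * (cos (u + b) * cos (v + b)) = cos (u - v) + cos ((2 : ℤ) * b + (u + v)) := by
  rw [← mul_assoc, two_mul_cos_mul_cos]
  congr 2 <;> push_cast <;> ring

/-- If `b ~ Uniform[0, 2π]` and `x, x', w` are fixed vectors, then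
`2 E_b[cos(wᵀx + b) cos(wᵀx' + b)] = cos(wᵀ(x - x'))`. -/
theorem two_expectation_cos_cos {d : ℕ} (w x x' : Fin d → ℝ) :
    2 * ((2 * Real.pi)⁻¹ *
        ∫ b in (0 : ℝ)..(2 * Real.pi),
          Real.cos (w ⬝ᵥ x + b) * Real.cos (w ⬝ᵥ x' + b)) =
      Real.cos (w ⬝ᵥ (x - x')) := by
  have cos_integrable (f : ℝ → ℝ) (hf : Continuous f) :
      IntervalIntegrable (fun b => cos (f b)) MeasureTheory.volume 0 (2 * π) :=
    (continuous_cos.comp hf).intervalIntegrable _ _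
  rw [mul_left_comm, ← intervalIntegral.integral_const_mul]
  simp_rw [two_mul_cos_add_mul_cos_add]
  rw [intervalIntegral.integral_add (cos_integrable _ continuous_const)
      (cos_integrable _ (by fun_prop)),
    integral_cos_int_mul_add_eq_zero two_ne_zero, intervalIntegral.integral_const, smul_eq_mul,
    sub_zero, add_zero, ← mul_assoc, inv_mul_cancel₀ (by positivity), one_mul, dotProduct_sub]
end

section
/- If f ~ N(m, V) is bivariate Gaussian with f = (f₁, f₂), then the conditional variance of f₁ given the event {f₁ < f₂} equals V₁₁ - s^{-1}·β·(β + α)·(V₁₁ - V₁₂)², where s = V₁₁ - 2V₁₂ + V₂₂ > 0, μ = m₂ - m₁, α = μ/√s, and β = φ(α)/Φ(α), with φ and Φ the standard Gaussian pdf and cdf. -/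
open MeasureTheory Real Matrix

/-- Multivariate Gaussian density `N(z | m, V)` on `ι → ℝ`. -/
noncomputable def mgauss {ι : Type*} [Fintype ι] [DecidableEq ι]
    (m : ι → ℝ) (V : Matrix ι ι ℝ) (z : ι → ℝ) : ℝ :=
  (Real.sqrt ((2 * Real.pi) ^ (Fintype.card ι) * V.det))⁻¹ *
    Real.exp (-(1 / 2) * ((z - m) ⬝ᵥ (V⁻¹ *ᵥ (z - m))))

/-- Standard Gaussian pdf. -/
noncomputable def stdNormalPdf (x : ℝ) : ℝ :=
  (Real.sqrt (2 * Real.pi))⁻¹ * Real.exp (-x ^ 2 / 2)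

/-- Standard Gaussian cdf. -/
noncomputable def stdNormalCdf (a : ℝ) : ℝ :=
  ∫ x in Set.Iic a, stdNormalPdf x

/-!
Factor `V = L Lᵀ` with `L` chosen so that, under `f = m + L u`, one has `f₂ - f₁ = μ + √s u₂`.
This affine change of variables turns the Gaussian density into `φ(u₁) φ(u₂)` and the event
`{f₁ < f₂}` into `{u₂ > -α}`, while `f₁ = m₁ + τ u₁ + q u₂` with `τ² + q² = V₁₁` and
`q² = (V₁₁ - V₁₂)² / s`. As `u₁` stays an untruncated standard normal independent of `u₂`, the
conditional variance is `τ² + q² Var(u₂ | u₂ > -α)`, and the truncated moments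
`∫_{-α}^∞ u φ(u) du = φ(α)`, `∫_{-α}^∞ u² φ(u) du = Φ(α) - α φ(α)` (from `φ' = -u φ`) give
`Var(u₂ | u₂ > -α) = 1 - α β - β²`.
-/

open Filter Set ProbabilityTheory Topology

lemma stdNormalPdf_eq_gaussianPDFReal : stdNormalPdf = gaussianPDFReal 0 1 := by
  ext x
  simp [stdNormalPdf, gaussianPDFReal]

lemma stdNormalPdf_pos (x : ℝ) : 0 < stdNormalPdf x := by
  unfold stdNormalPdf; positivity

lemma stdNormalPdf_neg (x : ℝ) : stdNormalPdf (-x) = stdNormalPdf x := by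
  simp [stdNormalPdf]

lemma continuous_stdNormalPdf : Continuous stdNormalPdf := by
  unfold stdNormalPdf; fun_prop

lemma hasDerivAt_stdNormalPdf (x : ℝ) : HasDerivAt stdNormalPdf (-x * stdNormalPdf x) x := by
  have h := (((hasDerivAt_pow 2 x).const_mul (-1 / 2 : ℝ)).exp).const_mul (√(2 * π))⁻¹
  have hφ : stdNormalPdf = fun y => (√(2 * π))⁻¹ * rexp (-1 / 2 * y ^ 2) := by
    ext y; simp only [stdNormalPdf]; ring_nf
  rw [hφ]
  exact h.congr_deriv (by norm_num; ring)

lemma pow_mul_stdNormalPdf_eq_rpow_mul_exp (n : ℕ) (x : ℝ) :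
    x ^ n * stdNormalPdf x = (√(2 * π))⁻¹ * (x ^ (n : ℝ) * rexp (-(1 / 2) * x ^ 2)) := by
  simp only [stdNormalPdf, Real.rpow_natCast]
  ring_nf

lemma integrable_pow_mul_stdNormalPdf (n : ℕ) :
    Integrable fun x => x ^ n * stdNormalPdf x := by
  simp only [pow_mul_stdNormalPdf_eq_rpow_mul_exp]
  exact (integrable_rpow_mul_exp_neg_mul_sq (by norm_num)
    (by linarith [n.cast_nonneg (α := ℝ)])).const_mul _

lemma tendsto_pow_mul_stdNormalPdf_atTop (n : ℕ) :
    Tendsto (fun x => x ^ n * stdNormalPdf x) atTop (𝓝 0) := by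
  have h := (rpow_mul_exp_neg_mul_sq_isLittleO_exp_neg (by norm_num : (0 : ℝ) < 1 / 2)
    n).trans_tendsto (tendsto_exp_atBot.comp (tendsto_id.const_mul_atTop_of_neg (by norm_num)))
  simpa only [pow_mul_stdNormalPdf_eq_rpow_mul_exp, mul_zero] using h.const_mul (√(2 * π))⁻¹

lemma integral_stdNormalPdf : ∫ x, stdNormalPdf x = 1 := by
  rw [stdNormalPdf_eq_gaussianPDFReal, integral_gaussianPDFReal_eq_one 0 one_ne_zero]

lemma integral_mul_stdNormalPdf : ∫ x, x * stdNormalPdf x = 0 := by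
  have h := integral_id_gaussianReal (μ := 0) (v := 1)
  rw [integral_gaussianReal_eq_integral_smul one_ne_zero] at h
  simpa [stdNormalPdf_eq_gaussianPDFReal, mul_comm] using h

lemma integral_sq_mul_stdNormalPdf : ∫ x, x ^ 2 * stdNormalPdf x = 1 := by
  have h := variance_fun_id_gaussianReal (μ := 0) (v := 1)
  rw [variance_eq_integral measurable_id'.aemeasurable, integral_id_gaussianReal,
    integral_gaussianReal_eq_integral_smul one_ne_zero] at h
  simpa [stdNormalPdf_eq_gaussianPDFReal, mul_comm] using h

lemma stdNormalCdf_pos (a : ℝ) : 0 < stdNormalCdf a := by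
  rw [stdNormalCdf, setIntegral_pos_iff_support_of_nonneg_ae
    (ae_of_all _ fun x => (stdNormalPdf_pos x).le)
    (by simpa using (integrable_pow_mul_stdNormalPdf 0).integrableOn)]
  simp [Function.support_eq_univ fun x => (stdNormalPdf_pos x).ne']

lemma setIntegral_Ioi_stdNormalPdf (a : ℝ) :
    ∫ x in Ioi a, stdNormalPdf x = stdNormalCdf (-a) := by
  rw [stdNormalCdf, ← integral_comp_neg_Ioi]
  simp only [stdNormalPdf_neg]

lemma setIntegral_Ioi_mul_stdNormalPdf (a : ℝ) :
    ∫ x in Ioi a, x * stdNormalPdf x = stdNormalPdf a := by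
  have h := integral_Ioi_of_hasDerivAt_of_tendsto (a := a) (f := fun x => -stdNormalPdf x)
    continuous_stdNormalPdf.neg.continuousWithinAt
    (fun x _ => (hasDerivAt_stdNormalPdf x).neg)
    (by simpa using (integrable_pow_mul_stdNormalPdf 1).integrableOn)
    (by simpa using (tendsto_pow_mul_stdNormalPdf_atTop 0).neg)
  simpa using h

lemma setIntegral_Ioi_sq_mul_stdNormalPdf (a : ℝ) :
    ∫ x in Ioi a, x ^ 2 * stdNormalPdf x = a * stdNormalPdf a + stdNormalCdf (-a) := by
  have h := integral_Ioi_of_hasDerivAt_of_tendsto (a := a) (f := fun x => -(x * stdNormalPdf x))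
    (f' := fun x => x ^ 2 * stdNormalPdf x - x ^ 0 * stdNormalPdf x)
    (continuous_id.mul continuous_stdNormalPdf).neg.continuousWithinAt
    (fun x _ => ((hasDerivAt_id x).mul (hasDerivAt_stdNormalPdf x)).neg.congr_deriv
      (by simp; ring))
    ((integrable_pow_mul_stdNormalPdf 2).sub (integrable_pow_mul_stdNormalPdf 0)).integrableOn
    (by simpa using (tendsto_pow_mul_stdNormalPdf_atTop 1).neg)
  rw [integral_sub (integrable_pow_mul_stdNormalPdf 2).integrableOn
    (integrable_pow_mul_stdNormalPdf 0).integrableOn] at h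
  simp only [pow_zero, one_mul, setIntegral_Ioi_stdNormalPdf] at h
  linarith

lemma integrable_affine_pow_mul_stdNormalPdf (c q : ℝ) (n : ℕ) :
    Integrable fun x => (c + q * x) ^ n * stdNormalPdf x := by
  simp_rw [add_pow, Finset.sum_mul]
  refine integrable_finsetSum _ fun k _ => ?_
  refine ((integrable_pow_mul_stdNormalPdf (n - k)).const_mul
    (c ^ k * q ^ (n - k) * n.choose k)).congr (ae_of_all _ fun x => ?_)
  ring

lemma setIntegral_Ioi_affine_mul_stdNormalPdf (b c q : ℝ) :
    ∫ x in Ioi b, (c + q * x) * stdNormalPdf x =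
      c * stdNormalCdf (-b) + q * stdNormalPdf b := by
  have hint (n : ℕ) := (integrable_pow_mul_stdNormalPdf n).integrableOn (s := Ioi b)
  calc _ = ∫ x in Ioi b, (c * (x ^ 0 * stdNormalPdf x) + q * (x ^ 1 * stdNormalPdf x)) := by
        congr 1; ext x; ring
    _ = _ := by
        rw [integral_add ((hint 0).const_mul c) ((hint 1).const_mul q), integral_const_mul,
          integral_const_mul]
        simp only [pow_zero, one_mul, pow_one, setIntegral_Ioi_stdNormalPdf,
          setIntegral_Ioi_mul_stdNormalPdf]

lemma setIntegral_Ioi_affine_sq_mul_stdNormalPdf (b c q : ℝ) :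
    ∫ x in Ioi b, (c + q * x) ^ 2 * stdNormalPdf x =
      c ^ 2 * stdNormalCdf (-b) + 2 * c * q * stdNormalPdf b +
        q ^ 2 * (b * stdNormalPdf b + stdNormalCdf (-b)) := by
  have hint (n : ℕ) := (integrable_pow_mul_stdNormalPdf n).integrableOn (s := Ioi b)
  calc _ = ∫ x in Ioi b, (c ^ 2 * (x ^ 0 * stdNormalPdf x) +
        2 * c * q * (x ^ 1 * stdNormalPdf x) + q ^ 2 * (x ^ 2 * stdNormalPdf x)) := by
        congr 1; ext x; ring
    _ = _ := by
        rw [integral_add (((hint 0).const_mul _).fun_add ((hint 1).const_mul _))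
            ((hint 2).const_mul _), integral_add ((hint 0).const_mul _) ((hint 1).const_mul _),
          integral_const_mul, integral_const_mul, integral_const_mul]
        simp only [pow_zero, one_mul, pow_one, setIntegral_Ioi_stdNormalPdf,
          setIntegral_Ioi_mul_stdNormalPdf, setIntegral_Ioi_sq_mul_stdNormalPdf]

section Product

variable {ν : Measure ℝ} [SFinite ν]

lemma integral_stdNormalPdf_mul_prod (h : ℝ → ℝ) :
    ∫ p, stdNormalPdf p.1 * h p.2 ∂(volume.prod ν) = ∫ w, h w ∂ν := by
  rw [integral_prod_mul, integral_stdNormalPdf, one_mul]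

lemma integral_add_mul_stdNormalPdf_mul_prod (c : ℝ) {a h : ℝ → ℝ} (hh : Integrable h ν)
    (hah : Integrable (fun w => a w * h w) ν) :
    ∫ p, (c * p.1 + a p.2) * (stdNormalPdf p.1 * h p.2) ∂(volume.prod ν) =
      ∫ w, a w * h w ∂ν := by
  have hint (n : ℕ) := integrable_pow_mul_stdNormalPdf n
  calc _ = ∫ p, (p.1 ^ 1 * stdNormalPdf p.1 * (c * h p.2) +
          p.1 ^ 0 * stdNormalPdf p.1 * (a p.2 * h p.2)) ∂(volume.prod ν) := by
        congr 1; ext p; ring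
    _ = _ := by
        rw [integral_add ((hint 1).mul_prod (hh.const_mul c)) ((hint 0).mul_prod hah),
          integral_prod_mul (fun t => t ^ 1 * stdNormalPdf t) (fun w => c * h w),
          integral_prod_mul (fun t => t ^ 0 * stdNormalPdf t) (fun w => a w * h w)]
        simp [integral_mul_stdNormalPdf, integral_stdNormalPdf]

lemma integral_add_sq_mul_stdNormalPdf_mul_prod (c : ℝ) {a h : ℝ → ℝ} (hh : Integrable h ν)
    (hah : Integrable (fun w => a w * h w) ν) (ha2h : Integrable (fun w => a w ^ 2 * h w) ν) :
    ∫ p, (c * p.1 + a p.2) ^ 2 * (stdNormalPdf p.1 * h p.2) ∂(volume.prod ν) =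
      c ^ 2 * ∫ w, h w ∂ν + ∫ w, a w ^ 2 * h w ∂ν := by
  have hint (n : ℕ) := integrable_pow_mul_stdNormalPdf n
  calc _ = ∫ p, (p.1 ^ 2 * stdNormalPdf p.1 * (c ^ 2 * h p.2) +
          p.1 ^ 1 * stdNormalPdf p.1 * (2 * c * (a p.2 * h p.2)) +
          p.1 ^ 0 * stdNormalPdf p.1 * (a p.2 ^ 2 * h p.2)) ∂(volume.prod ν) := by
        congr 1; ext p; ring
    _ = _ := by
        rw [integral_add (((hint 2).mul_prod (hh.const_mul _)).fun_add
            ((hint 1).mul_prod (hah.const_mul _))) ((hint 0).mul_prod ha2h),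
          integral_add ((hint 2).mul_prod (hh.const_mul _)) ((hint 1).mul_prod (hah.const_mul _)),
          integral_prod_mul (fun t => t ^ 2 * stdNormalPdf t) (fun w => c ^ 2 * h w),
          integral_prod_mul (fun t => t ^ 1 * stdNormalPdf t) (fun w => 2 * c * (a w * h w)),
          integral_prod_mul (fun t => t ^ 0 * stdNormalPdf t) (fun w => a w ^ 2 * h w),
          integral_const_mul]
        simp [integral_sq_mul_stdNormalPdf, integral_mul_stdNormalPdf, integral_stdNormalPdf]

end Product

section TruncatedProduct

variable (b c d q : ℝ)

lemma integral_stdNormalPdf_mul_stdNormalPdf_prod_Ioi :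
    ∫ p, stdNormalPdf p.1 * stdNormalPdf p.2 ∂(volume.prod (volume.restrict (Ioi b))) =
      stdNormalCdf (-b) := by
  rw [integral_stdNormalPdf_mul_prod, setIntegral_Ioi_stdNormalPdf]

lemma integral_affine_mul_stdNormalPdf_mul_stdNormalPdf_prod_Ioi :
    ∫ p, (c * p.1 + (d + q * p.2)) * (stdNormalPdf p.1 * stdNormalPdf p.2)
        ∂(volume.prod (volume.restrict (Ioi b))) =
      d * stdNormalCdf (-b) + q * stdNormalPdf b := by
  have h0 : IntegrableOn stdNormalPdf (Ioi b) := by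
    simpa using (integrable_pow_mul_stdNormalPdf 0).integrableOn
  have h1 : IntegrableOn (fun w => (d + q * w) * stdNormalPdf w) (Ioi b) := by
    simpa using (integrable_affine_pow_mul_stdNormalPdf d q 1).integrableOn
  rw [integral_add_mul_stdNormalPdf_mul_prod c h0 h1, setIntegral_Ioi_affine_mul_stdNormalPdf]

lemma integral_affine_sq_mul_stdNormalPdf_mul_stdNormalPdf_prod_Ioi :
    ∫ p, (c * p.1 + (d + q * p.2)) ^ 2 * (stdNormalPdf p.1 * stdNormalPdf p.2)
        ∂(volume.prod (volume.restrict (Ioi b))) =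
      c ^ 2 * stdNormalCdf (-b) + (d ^ 2 * stdNormalCdf (-b) + 2 * d * q * stdNormalPdf b +
        q ^ 2 * (b * stdNormalPdf b + stdNormalCdf (-b))) := by
  have h0 : IntegrableOn stdNormalPdf (Ioi b) := by
    simpa using (integrable_pow_mul_stdNormalPdf 0).integrableOn
  have h1 : IntegrableOn (fun w => (d + q * w) * stdNormalPdf w) (Ioi b) := by
    simpa using (integrable_affine_pow_mul_stdNormalPdf d q 1).integrableOn
  rw [integral_add_sq_mul_stdNormalPdf_mul_prod c h0 h1
      (integrable_affine_pow_mul_stdNormalPdf d q 2).integrableOn,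
    setIntegral_Ioi_affine_sq_mul_stdNormalPdf, setIntegral_Ioi_stdNormalPdf]

end TruncatedProduct

section AffineChange

variable {ι : Type*} [Fintype ι] [DecidableEq ι]

lemma integral_comp_add_mulVec (m : ι → ℝ) {L : Matrix ι ι ℝ} (hL : L.det ≠ 0)
    (g : (ι → ℝ) → ℝ) : ∫ u, g (m + L *ᵥ u) = |L.det|⁻¹ * ∫ x, g x := by
  have hdet : LinearMap.det (Matrix.toLin' L) ≠ 0 := by rwa [LinearMap.det_toLin']
  let e : (ι → ℝ) ≃ᵐ (ι → ℝ) :=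
    ((Matrix.toLin' L).equivOfDetNeZero hdet).toContinuousLinearEquiv.toHomeomorph.toMeasurableEquiv
  have hmap : Measure.map e volume = ENNReal.ofReal |L.det⁻¹| • volume := by
    rw [← LinearMap.det_toLin' L]
    exact Measure.map_linearMap_addHaar_eq_smul_addHaar volume hdet
  calc ∫ u, g (m + L *ᵥ u) = ∫ y, g (m + y) ∂(Measure.map e volume) :=
        (integral_map_equiv e (fun y => g (m + y))).symm
    _ = |L.det|⁻¹ * ∫ x, g x := by
        rw [hmap, integral_smul_measure, integral_add_left_eq_self,
          ENNReal.toReal_ofReal (abs_nonneg _), abs_inv, smul_eq_mul]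

lemma abs_det_mul_mgauss_add_mulVec (m : ι → ℝ) {L : Matrix ι ι ℝ} (hL : L.det ≠ 0)
    (u : ι → ℝ) :
    |L.det| * mgauss m (L * Lᵀ) (m + L *ᵥ u) = ∏ i, stdNormalPdf (u i) := by
  have hU : IsUnit L.det := hL.isUnit
  have hquad : (L *ᵥ u) ⬝ᵥ ((L * Lᵀ)⁻¹ *ᵥ (L *ᵥ u)) = u ⬝ᵥ u := by
    rw [Matrix.mul_inv_rev, ← Matrix.transpose_nonsing_inv, ← Matrix.mulVec_mulVec,
      Matrix.mulVec_mulVec u L⁻¹ L, Matrix.nonsing_inv_mul _ hU, Matrix.one_mulVec,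
      Matrix.dotProduct_mulVec, Matrix.vecMul_transpose, Matrix.mulVec_mulVec,
      Matrix.nonsing_inv_mul _ hU, Matrix.one_mulVec]
  have hnorm : √((2 * π) ^ Fintype.card ι * (L * Lᵀ).det) =
      √(2 * π) ^ Fintype.card ι * |L.det| := by
    rw [Matrix.det_mul, Matrix.det_transpose, ← sq, Real.sqrt_mul (by positivity),
      Real.sqrt_sq_eq_abs, ← Real.sqrt_sq (by positivity : 0 ≤ √(2 * π) ^ Fintype.card ι),
      pow_right_comm, Real.sq_sqrt (by positivity)]
  rw [mgauss, add_sub_cancel_left, hquad, hnorm]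
  simp only [stdNormalPdf, Finset.prod_mul_distrib, Finset.prod_const, Finset.card_univ,
    ← Real.exp_sum, dotProduct, Finset.mul_sum, mul_inv, inv_pow]
  field_simp

lemma integral_mul_mgauss_mul_transpose (m : ι → ℝ) {L : Matrix ι ι ℝ} (hL : L.det ≠ 0)
    (g : (ι → ℝ) → ℝ) :
    ∫ x, g x * mgauss m (L * Lᵀ) x = ∫ u, g (m + L *ᵥ u) * ∏ i, stdNormalPdf (u i) := by
  simp_rw [← abs_det_mul_mgauss_add_mulVec m hL, mul_left_comm _ |L.det|]
  rw [integral_const_mul, integral_comp_add_mulVec m hL (fun x => g x * mgauss m (L * Lᵀ) x),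
    mul_inv_cancel_left₀ (abs_ne_zero.2 hL)]

end AffineChange

section Bivariate

variable {V : Matrix (Fin 2) (Fin 2) ℝ}

lemma Matrix.PosDef.fin_two_diff_pos (hV : V.PosDef) : 0 < V 0 0 - 2 * V 0 1 + V 1 1 := by
  have h := (Matrix.posDef_iff_dotProduct_mulVec.mp hV).2 (x := ![-1, 1])
    (by simp [funext_iff, Fin.forall_fin_two])
  have hsymm : V 1 0 = V 0 1 := by simpa using hV.1.apply 0 1
  simp [dotProduct, Matrix.mulVec, Fin.sum_univ_two, hsymm] at h
  linarith

/-- A factor `L * Lᵀ = V` whose second row exceeds the first by `(0, √s)`, where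
`s = V 0 0 - 2 * V 0 1 + V 1 1`: under `f = m + L *ᵥ u`, the coordinate `u 1` is the
standardization of `f 1 - f 0`. -/
noncomputable def diffFactor (V : Matrix (Fin 2) (Fin 2) ℝ) : Matrix (Fin 2) (Fin 2) ℝ :=
  (√(V 0 0 - 2 * V 0 1 + V 1 1))⁻¹ • !![√V.det, V 0 1 - V 0 0; √V.det, V 1 1 - V 0 1]

lemma diffFactor_zero_one :
    diffFactor V 0 1 = (V 0 1 - V 0 0) / √(V 0 0 - 2 * V 0 1 + V 1 1) := by
  simp [diffFactor, div_eq_inv_mul]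

lemma diffFactor_mul_transpose (hV : V.PosDef) : diffFactor V * (diffFactor V)ᵀ = V := by
  have hs := hV.fin_two_diff_pos
  have hsymm : V 1 0 = V 0 1 := by simpa using hV.1.apply 0 1
  have hdet : √V.det * √V.det = V 0 0 * V 1 1 - V 0 1 ^ 2 := by
    rw [Real.mul_self_sqrt hV.det_pos.le, Matrix.det_fin_two, hsymm]; ring
  rw [diffFactor, Matrix.transpose_smul, Matrix.smul_mul, Matrix.mul_smul, smul_smul,
    ← mul_inv, Real.mul_self_sqrt hs.le]
  ext i j
  fin_cases i <;> fin_cases j <;>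
    simp [Matrix.vecMul, dotProduct, Fin.sum_univ_two, hdet, hsymm] <;> field_simp <;> ring

lemma det_diffFactor (hV : V.PosDef) : (diffFactor V).det = √V.det := by
  have hs := hV.fin_two_diff_pos
  rw [diffFactor, Matrix.det_smul, Matrix.det_fin_two_of]
  simp only [Fintype.card_fin, inv_pow, Real.sq_sqrt hs.le]
  field_simp
  ring

lemma diffFactor_mulVec_one_sub_zero (hV : V.PosDef) (u : Fin 2 → ℝ) :
    (diffFactor V *ᵥ u) 1 - (diffFactor V *ᵥ u) 0 = √(V 0 0 - 2 * V 0 1 + V 1 1) * u 1 := by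
  have hs := hV.fin_two_diff_pos
  simp [diffFactor, Matrix.mulVec, dotProduct, Fin.sum_univ_two]
  field_simp
  rw [Real.sq_sqrt hs.le]
  ring

lemma integral_mul_ite_lt_mgauss (m : Fin 2 → ℝ) (hV : V.PosDef) (k : ℝ → ℝ) :
    ∫ f : Fin 2 → ℝ, k (f 0) * (if f 0 < f 1 then mgauss m V f else 0) =
      ∫ p, k (diffFactor V 0 0 * p.1 + (m 0 + diffFactor V 0 1 * p.2)) *
          (stdNormalPdf p.1 * stdNormalPdf p.2)
        ∂(volume.prod (volume.restrict (Ioi (-((m 1 - m 0) / √(V 0 0 - 2 * V 0 1 + V 1 1)))))) := by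
  set α := (m 1 - m 0) / √(V 0 0 - 2 * V 0 1 + V 1 1)
  have hσ : 0 < √(V 0 0 - 2 * V 0 1 + V 1 1) := Real.sqrt_pos.2 hV.fin_two_diff_pos
  have hL : (diffFactor V).det ≠ 0 := by
    rw [det_diffFactor hV]; exact (Real.sqrt_pos.2 hV.det_pos).ne'
  have hchange := integral_mul_mgauss_mul_transpose m hL
    (fun f => if f 0 < f 1 then k (f 0) else 0)
  rw [diffFactor_mul_transpose hV] at hchange
  have hcond (u : Fin 2 → ℝ) :
      (m + diffFactor V *ᵥ u) 0 < (m + diffFactor V *ᵥ u) 1 ↔ -α < u 1 := by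
    have := diffFactor_mulVec_one_sub_zero hV u
    rw [← neg_div, div_lt_iff₀ hσ]
    simp only [Pi.add_apply]
    constructor <;> intro h <;> linarith
  calc _ = ∫ f, (if f 0 < f 1 then k (f 0) else 0) * mgauss m V f :=
        integral_congr_ae (ae_of_all _ fun f => by by_cases h : f 0 < f 1 <;> simp [h])
    _ = ∫ p : ℝ × ℝ, (univ ×ˢ Ioi (-α)).indicator (fun p => k (diffFactor V 0 0 * p.1 +
          (m 0 + diffFactor V 0 1 * p.2)) * (stdNormalPdf p.1 * stdNormalPdf p.2)) p := by
        rw [hchange, ← (volume_preserving_finTwoArrow ℝ).symm.integral_comp']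
        refine integral_congr_ae (ae_of_all _ fun ⟨t, w⟩ => ?_)
        have hvec : MeasurableEquiv.finTwoArrow.symm (t, w) = ![t, w] := rfl
        beta_reduce
        rw [hvec]
        simp only [hcond]
        simp only [Pi.add_apply, Matrix.mulVec, dotProduct, Fin.sum_univ_two, Fin.prod_univ_two,
          indicator, mem_prod, mem_univ, mem_Ioi, true_and, Matrix.cons_val_zero,
          Matrix.cons_val_one]
        split_ifs <;> ring_nf
    _ = _ := by
        rw [integral_indicator (MeasurableSet.univ.prod measurableSet_Ioi),
          Measure.volume_eq_prod, ← Measure.prod_restrict, Measure.restrict_univ]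

end Bivariate

/-- Variance of `f₁` conditional on the event `{f₁ < f₂}` for a bivariate
Gaussian `f ~ N(m, V)`: it equals
`V₁₁ - s⁻¹ β (β + α) (V₁₁ - V₁₂)²` with `s = V₁₁ - 2V₁₂ + V₂₂`,
`μ = m₂ - m₁`, `α = μ/√s`, `β = φ(α)/Φ(α)`. -/
theorem truncated_bivariate_gaussian_conditional_variance
    (m : Fin 2 → ℝ) (V : Matrix (Fin 2) (Fin 2) ℝ) (hV : V.PosDef) :
    let ρ : (Fin 2 → ℝ) → ℝ := fun f => if f 0 < f 1 then mgauss m V f else 0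
    let Z : ℝ := ∫ f : Fin 2 → ℝ, ρ f
    let s : ℝ := V 0 0 - 2 * V 0 1 + V 1 1
    let μ : ℝ := m 1 - m 0
    let α : ℝ := μ / Real.sqrt s
    let β : ℝ := stdNormalPdf α / stdNormalCdf α
    (Z⁻¹ * ∫ f : Fin 2 → ℝ, (f 0) ^ 2 * ρ f) -
        (Z⁻¹ * ∫ f : Fin 2 → ℝ, f 0 * ρ f) ^ 2 =
      V 0 0 - s⁻¹ * β * (β + α) * (V 0 0 - V 0 1) ^ 2 := by
  intro ρ Z s μ α β
  set τ := diffFactor V 0 0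
  set q := diffFactor V 0 1
  have hZ : Z = stdNormalCdf α := by
    have h := integral_mul_ite_lt_mgauss m hV fun _ => 1
    simp only [one_mul] at h
    refine h.trans ((integral_stdNormalPdf_mul_stdNormalPdf_prod_Ioi _).trans ?_)
    rw [neg_neg]
  have hE1 : ∫ f : Fin 2 → ℝ, f 0 * ρ f = m 0 * stdNormalCdf α + q * stdNormalPdf α := by
    rw [(integral_mul_ite_lt_mgauss m hV fun x => x).trans
      (integral_affine_mul_stdNormalPdf_mul_stdNormalPdf_prod_Ioi ..), neg_neg, stdNormalPdf_neg]
  have hE2 : ∫ f : Fin 2 → ℝ, f 0 ^ 2 * ρ f = τ ^ 2 * stdNormalCdf α + (m 0 ^ 2 * stdNormalCdf α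
      + 2 * m 0 * q * stdNormalPdf α + q ^ 2 * (-α * stdNormalPdf α + stdNormalCdf α)) := by
    rw [(integral_mul_ite_lt_mgauss m hV fun x => x ^ 2).trans
      (integral_affine_sq_mul_stdNormalPdf_mul_stdNormalPdf_prod_Ioi ..), neg_neg,
      stdNormalPdf_neg]
  have hτq : τ ^ 2 + q ^ 2 = V 0 0 := by
    simpa [Matrix.mul_apply, sq] using congrFun₂ (diffFactor_mul_transpose hV) 0 0
  have hq : q ^ 2 = s⁻¹ * (V 0 0 - V 0 1) ^ 2 := by
    rw [show q = _ from diffFactor_zero_one, div_pow, Real.sq_sqrt hV.fin_two_diff_pos.le]; ring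
  have hΦ := (stdNormalCdf_pos α).ne'
  rw [hZ, hE1, hE2]
  calc _ = τ ^ 2 + q ^ 2 - q ^ 2 * β * (β + α) := by simp only [β]; field_simp; ring
    _ = _ := by rw [hτq, hq]; ring
end
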